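/- arXiv:1505.06805 — 2 statements merged into one kernel-verified Lean document; each statement's English description precedes it below -/
import Mathlib

section
/- For every positive integer m, (1/(2m)) · Σ_{d | 2m} φ(d) · tr(M^{2m/d}) = 2 + (1/m) · Σ_{d | m} φ(d) · 4^{m/d}, where tr(M^k) = (2^k + 2)(1 + (-1)^k) and φ is Euler's totient function. -/
open Finset

/-- `tr(M^k) = (2^k + 2)(1 + (-1)^k)` as a rational number. -/
def trM (k : ℕ) : ℚ := (2 ^ k + 2) * (1 + (-1) ^ k)

theorem sum_totient_trM (m : ℕ) (hm : 0 < m) :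
    (1 / (2 * m : ℚ)) * ∑ d ∈ (2 * m).divisors, (Nat.totient d : ℚ) * trM ((2 * m) / d)
      = 2 + (1 / (m : ℚ)) * ∑ d ∈ m.divisors, (Nat.totient d : ℚ) * 4 ^ (m / d) := by
  have hsub : m.divisors ⊆ (2 * m).divisors :=
    Nat.divisors_subset_of_dvd (by positivity) ⟨2, by ring⟩
  have hzero : ∀ d ∈ (2 * m).divisors, d ∉ m.divisors →
      (Nat.totient d : ℚ) * trM ((2 * m) / d) = 0 := by
    intro d hd hnd
    have hd' : d ∣ 2 * m := (Nat.mem_divisors.mp hd).1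
    have hodd : Odd ((2 * m) / d) := by
      rw [Nat.not_even_iff_odd.symm, even_iff_two_dvd]
      rintro ⟨k, hk⟩
      apply hnd
      rw [Nat.mem_divisors]
      refine ⟨⟨k, ?_⟩, hm.ne'⟩
      have h2 : 2 * m = d * (2 * k) := Nat.eq_mul_of_div_eq_right hd' hk
      have h3 : 2 * m = 2 * (d * k) := by rw [h2]; ring
      exact Nat.eq_of_mul_eq_mul_left two_pos h3
    have : ((-1 : ℚ)) ^ ((2 * m) / d) = -1 := hodd.neg_one_pow
    simp [trM, this]
  rw [← Finset.sum_subset hsub hzero]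
  have hterm : ∀ d ∈ m.divisors,
      (Nat.totient d : ℚ) * trM ((2 * m) / d)
        = (Nat.totient d : ℚ) * (2 * 4 ^ (m / d) + 4) := by
    intro d hd
    have hdm : d ∣ m := (Nat.mem_divisors.mp hd).1
    have : (2 * m) / d = 2 * (m / d) := Nat.mul_div_assoc 2 hdm
    have h4 : (((2:ℚ))^2)^(m/d) = 4^(m/d) := by norm_num
    have h1 : (((-1:ℚ))^2)^(m/d) = 1 := by norm_num
    rw [this, trM, pow_mul, pow_mul, h4, h1]
    ring
  rw [Finset.sum_congr rfl hterm]
  have hsum : ∑ d ∈ m.divisors, (Nat.totient d : ℚ) * (2 * 4 ^ (m / d) + 4)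
      = 2 * (∑ d ∈ m.divisors, (Nat.totient d : ℚ) * 4 ^ (m / d)) + 4 * m := by
    have htot : (∑ d ∈ m.divisors, (Nat.totient d : ℚ)) = m := by
      rw [← Nat.cast_sum]
      exact_mod_cast congrArg (Nat.cast : ℕ → ℚ) (Nat.sum_totient m)
    calc ∑ d ∈ m.divisors, (Nat.totient d : ℚ) * (2 * 4 ^ (m / d) + 4)
        = ∑ d ∈ m.divisors, (2 * ((Nat.totient d : ℚ) * 4 ^ (m / d)) + 4 * (Nat.totient d : ℚ)) := by
          apply Finset.sum_congr rfl; intros; ring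
      _ = 2 * (∑ d ∈ m.divisors, (Nat.totient d : ℚ) * 4 ^ (m / d)) + 4 * m := by
          rw [Finset.sum_add_distrib, ← Finset.mul_sum, ← Finset.mul_sum, htot]
  rw [hsum]
  have hm' : (m : ℚ) ≠ 0 := Nat.cast_ne_zero.mpr hm.ne'
  field_simp
  ring
end

section
/- Let Γ be the directed graph on vertex set {0,…,11} with edges: i → (i+1 mod 6) for i in {0,…,5}; (6+i) → (6 + (i-1 mod 6)) for i in {0,…,5}; and bidirectional edges between i and 6 + ((i+2) mod 6) for i in {0,…,5}. Then the number H_n of closed walks of length n in Γ counted up to cyclic rotation satisfies: H_n = 0 if n is odd, and H_{2m} = 2 + (1/m) Σ_{d|m} φ(d) 4^{m/d} for all positive integers m. -/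
open Finset

/-- The directed graph `Γ` on vertices `{0,…,11}`: edges `i → (i+1 mod 6)` for
`i < 6`; edges `6+i → 6+((i-1) mod 6)` for `i < 6`; and bidirectional edges
between `i` and `6 + ((i+2) mod 6)` for `i < 6`. -/
def GammaAdj (i j : Fin 12) : Prop :=
  (i.val < 6 ∧ j.val < 6 ∧ j.val = (i.val + 1) % 6) ∨
  (6 ≤ i.val ∧ 6 ≤ j.val ∧ j.val = 6 + ((i.val - 6) + 5) % 6) ∨
  (i.val < 6 ∧ j.val = 6 + (i.val + 2) % 6) ∨
  (j.val < 6 ∧ i.val = 6 + (j.val + 2) % 6)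

/-- The set of closed walks of length `n` in `Γ`, up to cyclic rotation. -/
def HQuot (n : ℕ) :=
  Quot (fun v w : {v : ZMod n → Fin 12 // ∀ i, GammaAdj (v i) (v (i + 1))} =>
    ∃ k : ZMod n, ∀ i, v.1 (i + k) = w.1 i)

/-- `H n`: the number of closed walks of length `n` in `Γ` counted up to cyclic
rotation. -/
noncomputable def Hcount (n : ℕ) : ℕ := Nat.card (HQuot n)

namespace HP

def C6Adj (a b : ZMod 6) : Prop := b = a + 1 ∨ b = a - 1

instance (i j : Fin 12) : Decidable (GammaAdj i j) := by unfold GammaAdj; infer_instance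
instance (a b : ZMod 6) : Decidable (C6Adj a b) := by unfold C6Adj; infer_instance

lemma neq61 : ∀ b : ZMod 6, ¬ (b + 1 = b - 1) := by decide

def fmap (v : Fin 12) : ZMod 6 :=
  if v.val < 6 then (v.val : ZMod 6) else ((v.val + 3 : ℕ) : ZMod 6)

def Gmap (a b : ZMod 6) : Fin 12 :=
  if b = a + 1 then ⟨b.val, b.val_lt.trans (by norm_num)⟩
  else ⟨6 + (a + 2 : ZMod 6).val, by have := (a + 2 : ZMod 6).val_lt; omega⟩

lemma G1 : ∀ u w, GammaAdj u w → C6Adj (fmap u) (fmap w) := by decide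
lemma G2 : ∀ u w, GammaAdj u w → Gmap (fmap u) (fmap w) = w := by decide
lemma G3 : ∀ a b c, C6Adj a b → C6Adj b c → GammaAdj (Gmap a b) (Gmap b c) := by decide
lemma G4 : ∀ a b, C6Adj a b → fmap (Gmap a b) = b := by decide

def GW (n : ℕ) := {v : ZMod n → Fin 12 // ∀ i, GammaAdj (v i) (v (i + 1))}
def CW (n : ℕ) := {r : ZMod n → ZMod 6 // ∀ i, C6Adj (r i) (r (i + 1))}

variable {n : ℕ}

/-- The walk equivalence Γ-walks ≃ C6-walks. -/
def walkEquiv (n : ℕ) : GW n ≃ CW n where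
  toFun v := ⟨fun i => fmap (v.1 i), fun i => G1 _ _ (v.2 i)⟩
  invFun r := ⟨fun i => Gmap (r.1 (i - 1)) (r.1 i), fun i => by
    have h1 : C6Adj (r.1 (i - 1)) (r.1 i) := by
      have := r.2 (i - 1); rwa [sub_add_cancel] at this
    have h2 : C6Adj (r.1 i) (r.1 (i + 1)) := r.2 i
    have := G3 _ _ _ h1 h2
    simpa [add_sub_cancel_right] using this⟩
  left_inv v := by
    apply Subtype.ext; funext i
    have h : GammaAdj (v.1 (i - 1)) (v.1 i) := by
      have := v.2 (i - 1); rwa [sub_add_cancel] at this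
    exact G2 _ _ h
  right_inv r := by
    apply Subtype.ext; funext i
    have h1 : C6Adj (r.1 (i - 1)) (r.1 i) := by
      have := r.2 (i - 1); rwa [sub_add_cancel] at this
    exact G4 _ _ h1

/-- The C6-walks with the rotation addition action. -/
instance : AddAction (ZMod n) (CW n) where
  vadd k r := ⟨fun i => r.1 (i + k), fun i => by
    have := r.2 (i + k); simpa [add_right_comm] using this⟩
  zero_vadd r := by
    apply Subtype.ext; funext i; show r.1 (i + 0) = r.1 i; rw [add_zero]
  add_vadd a b r := by
    apply Subtype.ext; funext i; show r.1 (i + (a + b)) = r.1 (i + a + b); rw [add_assoc]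

lemma vadd_apply (k : ZMod n) (r : CW n) (i : ZMod n) : (k +ᵥ r).1 i = r.1 (i + k) := rfl

def shiftG (k : ZMod n) (v : GW n) : GW n :=
  ⟨fun i => v.1 (i + k), fun i => by have := v.2 (i + k); simpa [add_right_comm] using this⟩

lemma rel_iff (v w : GW n) :
    (∃ k : ZMod n, ∀ i, v.1 (i + k) = w.1 i) ↔
      (walkEquiv n v) ∈ AddAction.orbit (ZMod n) (walkEquiv n w) := by
  constructor
  · rintro ⟨k, hk⟩
    refine ⟨-k, ?_⟩
    apply Subtype.ext; funext i
    show fmap (w.1 (i + -k)) = fmap (v.1 i)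
    rw [← hk (i + -k), neg_add_cancel_right]
  · rintro ⟨k, hk⟩
    refine ⟨-k, fun i => ?_⟩
    have h2 : walkEquiv n (shiftG k w) = walkEquiv n v := by
      apply Subtype.ext; funext j
      exact congrFun (congrArg Subtype.val hk) j
    have h3 : shiftG k w = v := (walkEquiv n).injective h2
    have h4 : ∀ j, w.1 (j + k) = v.1 j := fun j => congrFun (congrArg Subtype.val h3) j
    rw [← h4 (i + -k), neg_add_cancel_right]

/-- HQuot is equivalent to the orbit-quotient of C6 walks. -/
def hquotEquiv (n : ℕ) : HQuot n ≃ AddAction.orbitRel.Quotient (ZMod n) (CW n) :=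
  Quot.congr (walkEquiv n) (fun v w => by
    rw [rel_iff v w, ← AddAction.orbitRel_apply]
    exact Iff.rfl)


section Periodic
variable {X : Type*} {n : ℕ}

lemma periodic_nsmul {v : ZMod n → X} {a : ZMod n} (hv : ∀ i, v (i + a) = v i) :
    ∀ (c : ℕ) (i), v (i + c • a) = v i := by
  intro c
  induction c with
  | zero => simp
  | succ c ih =>
    intro i
    rw [succ_nsmul, ← add_assoc, hv, ih]

lemma periodic_mul [NeZero n] {v : ZMod n → X} {a : ZMod n} (hv : ∀ i, v (i + a) = v i)
    (t : ZMod n) (i : ZMod n) : v (i + a * t) = v i := by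
  have h1 : a * t = t.val • a := by
    rw [nsmul_eq_mul, mul_comm]
    congr 1
    exact (ZMod.natCast_rightInverse t).symm
  rw [h1]
  exact periodic_nsmul hv t.val i

lemma periodic_k_iff_gcd [NeZero n] (k : ZMod n) (v : ZMod n → X) :
    (∀ i, v (i + k) = v i) ↔ (∀ i, v (i + ((n.gcd k.val : ℕ) : ZMod n)) = v i) := by
  constructor
  · intro hv i
    have hb : ((n.gcd k.val : ℕ) : ZMod n) = k * ((Nat.gcdB n k.val : ℤ) : ZMod n) := by
      have := Nat.gcd_eq_gcd_ab n k.val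
      have h2 : (((n.gcd k.val : ℕ) : ℤ) : ZMod n) = (((n : ℤ) * Nat.gcdA n k.val + (k.val : ℤ) * Nat.gcdB n k.val : ℤ) : ZMod n) := by
        rw [← this]
      push_cast at h2
      rw [ZMod.natCast_self] at h2
      rw [h2, ZMod.natCast_rightInverse k]
      ring
    rw [hb]
    exact periodic_mul hv _ i
  · intro hv i
    have hb : ((n.gcd k.val : ℕ) : ZMod n) * ((k.val / n.gcd k.val : ℕ) : ZMod n) = k := by
      rw [← Nat.cast_mul, Nat.mul_div_cancel' (Nat.gcd_dvd_right n k.val)]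
      exact ZMod.natCast_rightInverse k
    rw [← hb]
    exact periodic_mul hv _ i

def proj (g : ℕ) (x : ZMod n) : ZMod g := (x.val : ZMod g)

lemma cast_n_eq_zero {g : ℕ} (hg : g ∣ n) : ((n : ℕ) : ZMod g) = 0 := by
  obtain ⟨c, rfl⟩ := hg
  push_cast [ZMod.natCast_self]
  ring

lemma cast_mod {g : ℕ} (hg : g ∣ n) (a : ℕ) : ((a % n : ℕ) : ZMod g) = (a : ZMod g) := by
  conv_rhs => rw [← Nat.div_add_mod a n]
  push_cast [cast_n_eq_zero hg]
  ring

lemma proj_add [NeZero n] {g : ℕ} (hg : g ∣ n) (x y : ZMod n) :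
    proj g (x + y) = proj g x + proj g y := by
  unfold proj
  rw [ZMod.val_add, cast_mod hg]
  push_cast
  ring

lemma proj_one [NeZero n] {g : ℕ} (hg : g ∣ n) : proj g (1 : ZMod n) = 1 := by
  unfold proj
  rw [ZMod.val_one_eq_one_mod, cast_mod hg, Nat.cast_one]

lemma proj_natCast [NeZero n] {g : ℕ} [NeZero g] (hle : g ≤ n) (j : ZMod g) :
    proj g ((j.val : ZMod n)) = j := by
  unfold proj
  rw [ZMod.val_natCast, Nat.mod_eq_of_lt (lt_of_lt_of_le (ZMod.val_lt j) hle)]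
  exact ZMod.natCast_rightInverse j

lemma exists_decomp [NeZero n] {g : ℕ} (hg : g ∣ n) {x y : ZMod n}
    (h : proj g x = proj g y) : ∃ c : ℕ, x = y + ((g : ℕ) : ZMod n) * (c : ZMod n) := by
  obtain ⟨e, he⟩ := hg
  have hn : n % g = 0 := by rw [he]; exact Nat.mul_mod_right g e
  have hA : y.val % g = (x.val + n) % g := by
    unfold proj at h
    have h2 := (ZMod.natCast_eq_natCast_iff' x.val y.val g).mp h
    rw [Nat.add_mod, hn, Nat.add_zero, Nat.mod_mod_of_dvd x.val dvd_rfl, h2]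
  have hle : y.val ≤ x.val + n := le_of_lt (lt_of_lt_of_le (ZMod.val_lt y) (Nat.le_add_left n x.val))
  obtain ⟨c, hc⟩ := (Nat.modEq_iff_dvd' hle).mp hA
  refine ⟨c, ?_⟩
  have h1 : (y.val + g * c : ℕ) = x.val + n := by omega
  have h3 := congrArg (fun a : ℕ => (a : ZMod n)) h1
  push_cast [ZMod.natCast_self] at h3
  rw [ZMod.natCast_rightInverse y, ZMod.natCast_rightInverse x] at h3
  rw [add_zero] at h3
  exact h3.symm


lemma const_on_fibers [NeZero n] {g : ℕ} (hg : g ∣ n) {v : ZMod n → X}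
    (hv : ∀ i, v (i + ((g : ℕ) : ZMod n)) = v i) {x y : ZMod n}
    (h : proj g x = proj g y) : v x = v y := by
  obtain ⟨c, hc⟩ := exists_decomp hg h
  rw [hc]
  exact periodic_mul hv _ y

end Periodic

section Fixed
variable {n : ℕ} [NeZero n]

lemma proj_vadd_k (k : ZMod n) (i : ZMod n) :
    proj (n.gcd k.val) (i + k) = proj (n.gcd k.val) i := by
  rw [proj_add (Nat.gcd_dvd_left n k.val)]
  have h0 : proj (n.gcd k.val) k = 0 := by
    unfold proj
    exact (ZMod.natCast_eq_zero_iff k.val _).mpr (Nat.gcd_dvd_right n k.val)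
  rw [h0, add_zero]

/-- Walks fixed by rotation by `k` are walks of length `gcd n k.val`. -/
noncomputable def fixedEquiv (k : ZMod n) :
    (AddAction.fixedBy (CW n) k) ≃ CW (n.gcd k.val) := by
  set g := n.gcd k.val with hgdef
  have hdvd : g ∣ n := Nat.gcd_dvd_left n k.val
  have hle : g ≤ n := Nat.le_of_dvd (Nat.pos_of_ne_zero (NeZero.ne n)) hdvd
  haveI : NeZero g := ⟨Nat.gcd_ne_zero_left (NeZero.ne n)⟩
  have perg : ∀ x : CW n, (k +ᵥ x = x) → ∀ i, x.1 (i + ((g : ℕ) : ZMod n)) = x.1 i := by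
    intro x hx
    have hper : ∀ i, x.1 (i + k) = x.1 i := fun i => congrFun (congrArg Subtype.val hx) i
    exact (periodic_k_iff_gcd k x.1).mp hper
  refine
  { toFun := fun x => ⟨fun j => x.1.1 ((j.val : ZMod n)), ?_⟩
    invFun := fun u => ⟨⟨fun i => u.1 (proj g i), ?_⟩, ?_⟩
    left_inv := ?_
    right_inv := ?_ }
  · intro j
    have hx := x.2
    rw [AddAction.mem_fixedBy] at hx
    have hfib : proj g (((j.val : ZMod n)) + 1) = proj g ((((j+1) : ZMod g).val : ZMod n)) := by
      rw [proj_add hdvd, proj_one hdvd, proj_natCast hle, proj_natCast hle]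
    have hc := const_on_fibers hdvd (perg x.1 hx) hfib
    have := x.1.2 ((j.val : ZMod n))
    rwa [hc] at this
  · intro i
    show C6Adj (u.1 (proj g i)) (u.1 (proj g (i + 1)))
    have : proj g (i + 1) = proj g i + 1 := by rw [proj_add hdvd, proj_one hdvd]
    rw [this]
    exact u.2 (proj g i)
  · apply AddAction.mem_fixedBy.mpr
    apply Subtype.ext; funext i
    show u.1 (proj g (i + k)) = u.1 (proj g i)
    rw [proj_vadd_k]
  · intro x
    apply Subtype.ext; apply Subtype.ext; funext i
    show x.1.1 (((proj g i).val : ZMod n)) = x.1.1 i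
    have hx := x.2
    rw [AddAction.mem_fixedBy] at hx
    exact const_on_fibers hdvd (perg x.1 hx) (proj_natCast hle (proj g i))
  · intro u
    apply Subtype.ext; funext j
    show u.1 (proj g ((j.val : ZMod n))) = u.1 j
    rw [proj_natCast hle]

end Fixed

section Burnside

lemma card_HQuot_mul (n : ℕ) [NeZero n] :
    Nat.card (HQuot n) * n = ∑ k : ZMod n, Nat.card (CW (n.gcd (ZMod.val k))) := by
  classical
  haveI : Fintype (CW n) := by unfold CW C6Adj; infer_instance
  haveI : ∀ k : ZMod n, Fintype (AddAction.fixedBy (CW n) k) := fun k => Fintype.ofFinite _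
  haveI : Fintype (AddAction.orbitRel.Quotient (ZMod n) (CW n)) := Fintype.ofFinite _
  have hb := AddAction.sum_card_fixedBy_eq_card_orbits_mul_card_addGroup (ZMod n) (CW n)
  have h1 : Nat.card (HQuot n) = Fintype.card (AddAction.orbitRel.Quotient (ZMod n) (CW n)) := by
    rw [← Nat.card_eq_fintype_card]
    exact Nat.card_congr (hquotEquiv n)
  have h2 : ∀ k : ZMod n, Fintype.card (AddAction.fixedBy (CW n) k)
      = Nat.card (CW (n.gcd (ZMod.val k))) := by
    intro k
    rw [← Nat.card_eq_fintype_card]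
    exact Nat.card_congr (fixedEquiv k)
  rw [ZMod.card n] at hb
  rw [h1, ← hb]
  exact Finset.sum_congr rfl (fun k _ => h2 k)

end Burnside


/-- Number of walks of length `L` in the 6-cycle with displacement `t`. -/
def M : ℕ → ZMod 6 → ℕ
  | 0, t => if t = 0 then 1 else 0
  | (L+1), t => M L (t - 1) + M L (t + 1)

/-- Paths of length `L` from `a` to `b` in the 6-cycle. -/
def PW (L : ℕ) (a b : ZMod 6) :=
  {p : Fin (L+1) → ZMod 6 // p 0 = a ∧ p (Fin.last L) = b ∧
    ∀ j : Fin L, C6Adj (p j.castSucc) (p j.succ)}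

lemma c6_back {x b : ZMod 6} (h : C6Adj x b) : x = b - 1 ∨ x = b + 1 := by
  rcases h with h | h
  · left; rw [h]; ring
  · right; rw [h]; ring

lemma c6_left (b : ZMod 6) : C6Adj (b - 1) b := Or.inl (by ring)
lemma c6_right (b : ZMod 6) : C6Adj (b + 1) b := Or.inr (by ring)

section Split
variable {L : ℕ} {a b : ZMod 6}

lemma snoc_prop {c : ZMod 6} (hc : C6Adj c b) (q : PW L a c) :
    (Fin.snoc q.1 b : Fin (L+2) → ZMod 6) 0 = a ∧
    (Fin.snoc q.1 b : Fin (L+2) → ZMod 6) (Fin.last (L+1)) = b ∧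
    ∀ j : Fin (L+1), C6Adj ((Fin.snoc q.1 b : Fin (L+2) → ZMod 6) j.castSucc)
      ((Fin.snoc q.1 b : Fin (L+2) → ZMod 6) j.succ) := by
  refine ⟨?_, ?_, ?_⟩
  · rw [show (0 : Fin (L+2)) = Fin.castSucc 0 by rfl, Fin.snoc_castSucc]
    exact q.2.1
  · exact Fin.snoc_last _ _
  · intro j
    induction j using Fin.lastCases with
    | last =>
      rw [Fin.succ_last, Fin.snoc_last, Fin.snoc_castSucc, q.2.2.1]
      exact hc
    | cast j0 =>
      rw [Fin.succ_castSucc, Fin.snoc_castSucc, Fin.snoc_castSucc]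
      exact q.2.2.2 j0

def snocPW (c : ZMod 6) (hc : C6Adj c b) (q : PW L a c) : PW (L+1) a b :=
  ⟨Fin.snoc q.1 b, snoc_prop hc q⟩

lemma init_prop (p : PW (L+1) a b) {c : ZMod 6} (hc : p.1 ((Fin.last L).castSucc) = c) :
    (Fin.init p.1) 0 = a ∧ (Fin.init p.1) (Fin.last L) = c ∧
    ∀ j : Fin L, C6Adj (Fin.init p.1 j.castSucc) (Fin.init p.1 j.succ) := by
  refine ⟨?_, hc, ?_⟩
  · show p.1 (Fin.castSucc 0) = a
    rw [Fin.castSucc_zero]; exact p.2.1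
  · intro j0
    show C6Adj (p.1 (Fin.castSucc (Fin.castSucc j0))) (p.1 (Fin.castSucc (Fin.succ j0)))
    rw [← Fin.succ_castSucc]
    exact p.2.2.2 j0.castSucc

def initPW (p : PW (L+1) a b) (c : ZMod 6) (hc : p.1 ((Fin.last L).castSucc) = c) :
    PW L a c := ⟨Fin.init p.1, init_prop p hc⟩

instance (L : ℕ) (a b : ZMod 6) : Finite (PW L a b) := by unfold PW; infer_instance

lemma pw_last_adj (p : PW (L+1) a b) : C6Adj (p.1 ((Fin.last L).castSucc)) b := by
  have := p.2.2.2 (Fin.last L)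
  rwa [Fin.succ_last, p.2.2.1] at this

def pwSplit (L : ℕ) (a b : ZMod 6) : PW (L+1) a b ≃ (PW L a (b-1)) ⊕ (PW L a (b+1)) where
  toFun p :=
    if h : p.1 ((Fin.last L).castSucc) = b - 1 then Sum.inl (initPW p _ h)
    else Sum.inr (initPW p _ ((c6_back (pw_last_adj p)).resolve_left h))
  invFun q :=
    match q with
    | Sum.inl q => snocPW (b-1) (c6_left b) q
    | Sum.inr q => snocPW (b+1) (c6_right b) q
  left_inv p := by
    have hsnoc : Fin.snoc (Fin.init p.1) b = p.1 := by
      conv_rhs => rw [← Fin.snoc_init_self p.1]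
      rw [p.2.2.1]
    dsimp only
    by_cases h : p.1 ((Fin.last L).castSucc) = b - 1
    · rw [dif_pos h]
      exact Subtype.ext hsnoc
    · rw [dif_neg h]
      exact Subtype.ext hsnoc
  right_inv q := by
    rcases q with q | q
    · have htest : ((snocPW (b-1) (c6_left b) q).1 : Fin (L+2) → ZMod 6)
          ((Fin.last L).castSucc) = b - 1 := by
        show (Fin.snoc q.1 b : Fin (L+2) → ZMod 6) _ = b - 1
        rw [Fin.snoc_castSucc]; exact q.2.2.1
      dsimp only
      rw [dif_pos htest]
      congr 1
      apply Subtype.ext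
      funext j
      show (Fin.snoc q.1 b : Fin (L+2) → ZMod 6) j.castSucc = q.1 j
      rw [Fin.snoc_castSucc]
    · have htest : ((snocPW (b+1) (c6_right b) q).1 : Fin (L+2) → ZMod 6)
          ((Fin.last L).castSucc) = b + 1 := by
        show (Fin.snoc q.1 b : Fin (L+2) → ZMod 6) _ = b + 1
        rw [Fin.snoc_castSucc]; exact q.2.2.1
      dsimp only
      rw [dif_neg (by rw [htest]; exact neq61 b)]
      congr 1
      apply Subtype.ext
      funext j
      show (Fin.snoc q.1 b : Fin (L+2) → ZMod 6) j.castSucc = q.1 j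
      rw [Fin.snoc_castSucc]
  
lemma card_PW (L : ℕ) (a : ZMod 6) : ∀ b, Nat.card (PW L a b) = M L (b - a) := by
  induction L with
  | zero =>
    intro b
    by_cases h : b = a
    · subst h
      haveI : Unique (PW 0 b b) := by
        refine ⟨⟨⟨fun _ => b, rfl, rfl, fun j => j.elim0⟩⟩, ?_⟩
        rintro ⟨p, h0, hl, _⟩
        apply Subtype.ext; funext j
        show p j = b
        have hj : j = 0 := Fin.ext (by omega)
        rw [hj, h0]
      rw [Nat.card_unique]
      show _ = if (b - b) = 0 then 1 else 0
      rw [if_pos (sub_self b)]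
    · haveI : IsEmpty (PW 0 a b) := by
        constructor
        rintro ⟨p, h0, hl, _⟩
        exact h (by rw [← hl, ← h0]; rfl)
      rw [Nat.card_of_isEmpty]
      show _ = if (b - a) = 0 then 1 else 0
      rw [if_neg (sub_ne_zero.mpr h)]
  | succ L ih =>
    intro b
    rw [Nat.card_congr (pwSplit L a b), Nat.card_sum, ih, ih]
    show _ = M L (b - a - 1) + M L (b - a + 1)
    have e1 : b - 1 - a = b - a - 1 := by ring
    have e2 : b + 1 - a = b - a + 1 := by ring
    rw [e1, e2]

end Split

section CardCW
variable {g : ℕ} [NeZero g]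

instance (n : ℕ) [NeZero n] : Finite (CW n) := by unfold CW; infer_instance

def fiberEquiv (a : ZMod 6) : {r : CW g // r.1 0 = a} ≃ PW g a a where
  toFun x := ⟨fun j => x.1.1 ((j.val : ZMod g)), by
    refine ⟨?_, ?_, ?_⟩
    · show x.1.1 (((0 : Fin (g+1)).val : ZMod g)) = a
      rw [show (((0 : Fin (g+1)).val : ZMod g)) = 0 by norm_num]
      exact x.2
    · show x.1.1 (((Fin.last g).val : ZMod g)) = a
      rw [show (((Fin.last g).val : ZMod g)) = 0 by simp [Fin.last, ZMod.natCast_self]]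
      exact x.2
    · intro j
      show C6Adj (x.1.1 ((j.castSucc.val : ZMod g))) (x.1.1 ((j.succ.val : ZMod g)))
      have h1 : (j.castSucc.val : ZMod g) = (j.val : ZMod g) := rfl
      have h2 : (j.succ.val : ZMod g) = (j.val : ZMod g) + 1 := by
        show ((j.val + 1 : ℕ) : ZMod g) = _
        push_cast
        ring
      rw [h1, h2]
      exact x.1.2 _⟩
  invFun p := ⟨⟨fun i => p.1 ⟨i.val, (ZMod.val_lt i).trans (Nat.lt_succ_self g)⟩, by
      intro i
      show C6Adj (p.1 ⟨i.val, (ZMod.val_lt i).trans (Nat.lt_succ_self g)⟩)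
        (p.1 ⟨(i + 1 : ZMod g).val, (ZMod.val_lt _).trans (Nat.lt_succ_self g)⟩)
      have hvl : i.val < g := ZMod.val_lt i
      have hadj := p.2.2.2 ⟨i.val, hvl⟩
      have hv : (i + 1 : ZMod g).val = (i.val + 1) % g := by
        rw [ZMod.val_add, ZMod.val_one_eq_one_mod]
        conv_rhs => rw [Nat.add_mod]
        rw [Nat.mod_eq_of_lt hvl]
      by_cases hlt : i.val + 1 < g
      · have key : p.1 ⟨(i + 1 : ZMod g).val, (ZMod.val_lt _).trans (Nat.lt_succ_self g)⟩
            = p.1 ⟨i.val + 1, by omega⟩ :=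
          congrArg p.1 (Fin.ext (show (i + 1 : ZMod g).val = i.val + 1 by
            rw [hv]; exact Nat.mod_eq_of_lt hlt))
        rw [key]
        exact hadj
      · have heq : i.val + 1 = g := by omega
        have key : p.1 ⟨(i + 1 : ZMod g).val, (ZMod.val_lt _).trans (Nat.lt_succ_self g)⟩
            = p.1 ⟨i.val + 1, by omega⟩ := by
          have v0 : (i + 1 : ZMod g).val = 0 := by rw [hv, heq, Nat.mod_self]
          have l1 : p.1 ⟨(i + 1 : ZMod g).val, (ZMod.val_lt _).trans (Nat.lt_succ_self g)⟩
              = p.1 0 := congrArg p.1 (Fin.ext (show (i + 1 : ZMod g).val = (0 : Fin (g+1)).val by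
                rw [v0]; rfl))
          have l2 : p.1 ⟨i.val + 1, by omega⟩ = p.1 (Fin.last g) :=
            congrArg p.1 (Fin.ext (by show i.val + 1 = g; exact heq))
          rw [l1, l2, p.2.1, p.2.2.1]
        rw [key]
        exact hadj⟩, by
    show p.1 ⟨(0 : ZMod g).val, _⟩ = a
    have : (⟨(0 : ZMod g).val, (ZMod.val_lt _).trans (Nat.lt_succ_self g)⟩ : Fin (g+1)) = 0 :=
      Fin.ext (show (0 : ZMod g).val = (0 : Fin (g+1)).val by rw [ZMod.val_zero]; rfl)
    rw [this]
    exact p.2.1⟩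
  left_inv x := by
    apply Subtype.ext; apply Subtype.ext; funext i
    show x.1.1 ((i.val : ZMod g)) = x.1.1 i
    rw [ZMod.natCast_rightInverse i]
  right_inv p := by
    apply Subtype.ext; funext j
    show p.1 ⟨((j.val : ZMod g)).val, (ZMod.val_lt _).trans (Nat.lt_succ_self g)⟩ = p.1 j
    have hval : ((j.val : ZMod g)).val = j.val % g := ZMod.val_natCast g j.val
    by_cases hj : j.val < g
    · exact congrArg p.1 (Fin.ext (show ((j.val : ZMod g)).val = j.val by
        rw [hval]; exact Nat.mod_eq_of_lt hj))
    · have hjg : j.val = g := by have := j.isLt; omega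
      have l1 : p.1 ⟨((j.val : ZMod g)).val, (ZMod.val_lt _).trans (Nat.lt_succ_self g)⟩ = p.1 0 :=
        congrArg p.1 (Fin.ext (show ((j.val : ZMod g)).val = (0 : Fin (g+1)).val by
          rw [hval, hjg, Nat.mod_self]; rfl))
      have l2 : p.1 j = p.1 (Fin.last g) := congrArg p.1 (Fin.ext hjg)
      rw [l1, l2, p.2.1, p.2.2.1]

lemma card_CW (g : ℕ) [NeZero g] : Nat.card (CW g) = 6 * M g 0 := by
  classical
  have e : CW g ≃ Σ a : ZMod 6, PW g a a :=
    (Equiv.sigmaFiberEquiv (fun r : CW g => r.1 0)).symm.trans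
      (Equiv.sigmaCongrRight fun a => fiberEquiv a)
  rw [Nat.card_congr e]
  haveI : ∀ a : ZMod 6, Fintype (PW g a a) := fun a => Fintype.ofFinite _
  rw [Nat.card_eq_fintype_card]
  rw [Fintype.card_sigma]
  have hval : ∀ a : ZMod 6, Fintype.card (PW g a a) = M g 0 := by
    intro a
    rw [← Nat.card_eq_fintype_card, card_PW g a a, sub_self]
  rw [Finset.sum_congr rfl (fun a _ => hval a)]
  simp

end CardCW

section Mclosed

lemma Mvals (e : ℕ) : M (2*e) 1 = 0 ∧ M (2*e) 3 = 0 ∧ M (2*e) 5 = 0 ∧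
    M (2*e) 2 = M (2*e) 4 ∧ 3 * M (2*e) 0 = 4^e + 2 ∧ 3 * M (2*e) 2 + 1 = 4^e := by
  induction e with
  | zero => decide
  | succ e ih =>
    obtain ⟨h1, h3, h5, h24, h0, h2⟩ := ih
    have key : ∀ t : ZMod 6, M (2*(e+1)) t =
        M (2*e) (t - 1 - 1) + M (2*e) (t - 1 + 1) + (M (2*e) (t + 1 - 1) + M (2*e) (t + 1 + 1)) := by
      intro t
      rw [show 2*(e+1) = 2*e+1+1 by ring]
      rfl
    have k0 := key 0; have k1 := key 1; have k2 := key 2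
    have k3 := key 3; have k4 := key 4; have k5 := key 5
    rw [show (0:ZMod 6) - 1 - 1 = 4 by decide, show (0:ZMod 6) - 1 + 1 = 0 by decide,
        show (0:ZMod 6) + 1 - 1 = 0 by decide, show (0:ZMod 6) + 1 + 1 = 2 by decide] at k0
    rw [show (1:ZMod 6) - 1 - 1 = 5 by decide, show (1:ZMod 6) - 1 + 1 = 1 by decide,
        show (1:ZMod 6) + 1 - 1 = 1 by decide, show (1:ZMod 6) + 1 + 1 = 3 by decide] at k1
    rw [show (2:ZMod 6) - 1 - 1 = 0 by decide, show (2:ZMod 6) - 1 + 1 = 2 by decide,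
        show (2:ZMod 6) + 1 - 1 = 2 by decide, show (2:ZMod 6) + 1 + 1 = 4 by decide] at k2
    rw [show (3:ZMod 6) - 1 - 1 = 1 by decide, show (3:ZMod 6) - 1 + 1 = 3 by decide,
        show (3:ZMod 6) + 1 - 1 = 3 by decide, show (3:ZMod 6) + 1 + 1 = 5 by decide] at k3
    rw [show (4:ZMod 6) - 1 - 1 = 2 by decide, show (4:ZMod 6) - 1 + 1 = 4 by decide,
        show (4:ZMod 6) + 1 - 1 = 4 by decide, show (4:ZMod 6) + 1 + 1 = 0 by decide] at k4
    rw [show (5:ZMod 6) - 1 - 1 = 3 by decide, show (5:ZMod 6) - 1 + 1 = 5 by decide,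
        show (5:ZMod 6) + 1 - 1 = 5 by decide, show (5:ZMod 6) + 1 + 1 = 1 by decide] at k5
    have hp : 4^(e+1) = 4^e * 4 := pow_succ 4 e
    refine ⟨?_, ?_, ?_, ?_, ?_, ?_⟩ <;> omega

lemma Modd (e : ℕ) : M (2*e+1) 0 = 0 := by
  have key : M (2*e+1) 0 = M (2*e) (0 - 1) + M (2*e) (0 + 1) := rfl
  rw [show (0:ZMod 6) - 1 = 5 by decide, show (0:ZMod 6) + 1 = 1 by decide] at key
  obtain ⟨h1, _, h5, _⟩ := Mvals e
  omega

end Mclosed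

section OddCase

def col (v : Fin 12) : ZMod 2 :=
  if v.val < 6 then (v.val : ZMod 2) else ((v.val + 1 : ℕ) : ZMod 2)

lemma col_adj : ∀ u w, GammaAdj u w → col w = col u + 1 := by decide

lemma odd_empty {n : ℕ} (hn : Odd n) : IsEmpty (GW n) := by
  constructor
  intro v
  have key : ∀ c : ℕ, col (v.1 ((c : ZMod n))) = col (v.1 0) + (c : ZMod 2) := by
    intro c
    induction c with
    | zero => simp
    | succ c ih =>
      have h1 : ((c+1 : ℕ) : ZMod n) = ((c : ℕ) : ZMod n) + 1 := by push_cast; ring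
      rw [h1, col_adj _ _ (v.2 _), ih]
      push_cast
      ring
  have h2 := key n
  rw [ZMod.natCast_self] at h2
  have h3 : ((n : ℕ) : ZMod 2) = 0 := left_eq_add.mp h2
  rw [ZMod.natCast_eq_zero_iff] at h3
  obtain ⟨t, ht⟩ := h3
  obtain ⟨s, hs⟩ := hn
  omega

lemma Hcount_odd' {n : ℕ} (hn : Odd n) : Nat.card (HQuot n) = 0 := by
  haveI : IsEmpty (HQuot n) := by
    constructor
    intro q
    refine Quot.inductionOn q ?_
    intro v
    exact (odd_empty hn).false v
  exact Nat.card_of_isEmpty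

end OddCase

section EvenCase

lemma N_odd (e : ℕ) : Nat.card (CW (2*e+1)) = 0 := by
  haveI : NeZero (2*e+1) := ⟨by omega⟩
  rw [card_CW, Modd, Nat.mul_zero]

lemma N_even (e : ℕ) (he : 0 < e) : Nat.card (CW (2*e)) = 2*4^e + 4 := by
  haveI : NeZero (2*e) := ⟨by omega⟩
  rw [card_CW]
  have h := (Mvals e).2.2.2.2.1
  omega

lemma sum_gcd_eq (n : ℕ) [NeZero n] (F : ℕ → ℕ) :
    (∑ k : ZMod n, F (n.gcd (ZMod.val k))) = ∑ d ∈ n.divisors, Nat.totient (n/d) * F d := by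
  have hn : 0 < n := Nat.pos_of_ne_zero (NeZero.ne n)
  have h1 : (∑ k : ZMod n, F (n.gcd (ZMod.val k))) = ∑ j ∈ Finset.range n, F (n.gcd j) := by
    apply Finset.sum_bij' (fun (k : ZMod n) _ => ZMod.val k) (fun j _ => (j : ZMod n))
    · intro a _; exact Finset.mem_range.mpr (ZMod.val_lt a)
    · intro j _; exact Finset.mem_univ _
    · intro a _; exact ZMod.natCast_rightInverse a
    · intro j hj; exact ZMod.val_cast_of_lt (Finset.mem_range.mp hj)
    · intro a _; rfl
  rw [h1]
  have hmaps : ∀ j ∈ Finset.range n, n.gcd j ∈ n.divisors := fun j _ =>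
    Nat.mem_divisors.mpr ⟨Nat.gcd_dvd_left n j, hn.ne'⟩
  rw [← Finset.sum_fiberwise_of_maps_to' hmaps (fun d => F d)]
  apply Finset.sum_congr rfl
  intro d hd
  rw [Finset.sum_const, ← Nat.totient_div_of_dvd (Nat.dvd_of_mem_divisors hd), smul_eq_mul]

lemma hcount_even_nat (m : ℕ) (hm : 0 < m) :
    Nat.card (HQuot (2*m)) * (2*m)
      = 2 * (∑ d ∈ m.divisors, Nat.totient d * 4^(m/d)) + 4*m := by
  haveI : NeZero (2*m) := ⟨by omega⟩
  have hb := card_HQuot_mul (2*m)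
  rw [sum_gcd_eq (2*m) (fun d => Nat.card (CW d))] at hb
  rw [hb]
  have hzero : ∀ d ∈ ((2*m).divisors.filter (fun d => ¬ (2 ∣ d))),
      Nat.totient (2*m/d) * Nat.card (CW d) = 0 := by
    intro d hd
    rw [Finset.mem_filter] at hd
    have h2 : d = 2*(d/2)+1 := by omega
    rw [h2, N_odd, Nat.mul_zero]
  have hsplit := Finset.sum_filter_add_sum_filter_not ((2*m).divisors) (fun d => 2 ∣ d)
      (fun d => Nat.totient (2*m/d) * Nat.card (CW d))
  rw [← hsplit, Finset.sum_eq_zero hzero, Nat.add_zero]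
  have heven : ∑ d ∈ ((2*m).divisors.filter (fun d => 2 ∣ d)),
      Nat.totient (2*m/d) * Nat.card (CW d)
      = ∑ e ∈ m.divisors, Nat.totient (m/e) * (2*4^e + 4) := by
    refine Finset.sum_bij' (fun d _ => d / 2) (fun e _ => 2 * e) ?hi ?hj ?li ?ri ?hval
    case hi =>
      intro d hd
      rw [Finset.mem_filter, Nat.mem_divisors] at hd
      obtain ⟨⟨hdvd, _⟩, hpar⟩ := hd
      obtain ⟨c, rfl⟩ := hpar
      rw [Nat.mul_div_cancel_left c (by norm_num : 0 < 2)]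
      exact Nat.mem_divisors.mpr ⟨(Nat.mul_dvd_mul_iff_left (by norm_num : 0 < 2)).mp hdvd, hm.ne'⟩
    case hj =>
      intro e he
      rw [Nat.mem_divisors] at he
      exact Finset.mem_filter.mpr ⟨Nat.mem_divisors.mpr ⟨Nat.mul_dvd_mul_left 2 he.1, by omega⟩,
        Dvd.intro e rfl⟩
    case li =>
      intro d hd
      rw [Finset.mem_filter] at hd
      exact Nat.mul_div_cancel' hd.2
    case ri =>
      intro e _
      exact Nat.mul_div_cancel_left e (by norm_num : 0 < 2)
    case hval =>
      intro d hd
      rw [Finset.mem_filter, Nat.mem_divisors] at hd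
      obtain ⟨⟨hdvd, _⟩, hpar⟩ := hd
      obtain ⟨c, rfl⟩ := hpar
      have hc : 0 < c := by
        rcases Nat.eq_zero_or_pos c with h | h
        · exfalso
          rw [h, Nat.mul_zero] at hdvd
          have := Nat.eq_zero_of_zero_dvd hdvd
          omega
        · exact h
      rw [Nat.mul_div_cancel_left c (by norm_num : 0 < 2),
        Nat.mul_div_mul_left _ _ (by norm_num : 0 < 2), N_even c hc]
  rw [heven]
  have hdistrib : ∑ e ∈ m.divisors, Nat.totient (m/e) * (2*4^e + 4)
      = 2 * (∑ e ∈ m.divisors, Nat.totient (m/e) * 4^e) + 4 * (∑ e ∈ m.divisors, Nat.totient (m/e)) := by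
    rw [Finset.mul_sum, Finset.mul_sum, ← Finset.sum_add_distrib]
    apply Finset.sum_congr rfl
    intro e _
    ring
  rw [hdistrib]
  have htot : (∑ e ∈ m.divisors, Nat.totient (m/e)) = m := by
    rw [Nat.sum_div_divisors m Nat.totient]
    exact Nat.sum_totient m
  rw [htot]
  have hreindex : (∑ e ∈ m.divisors, Nat.totient (m/e) * 4^e)
      = ∑ d ∈ m.divisors, Nat.totient d * 4^(m/d) := by
    refine Finset.sum_bij' (fun d _ => m / d) (fun d _ => m / d) ?hi ?hj ?li ?ri ?hval
    case hi =>
      intro a ha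
      exact Nat.mem_divisors.mpr ⟨Nat.div_dvd_of_dvd (Nat.dvd_of_mem_divisors ha), hm.ne'⟩
    case hj =>
      intro a ha
      exact Nat.mem_divisors.mpr ⟨Nat.div_dvd_of_dvd (Nat.dvd_of_mem_divisors ha), hm.ne'⟩
    case li =>
      intro a ha; exact Nat.div_div_self (Nat.dvd_of_mem_divisors ha) hm.ne'
    case ri =>
      intro a ha; exact Nat.div_div_self (Nat.dvd_of_mem_divisors ha) hm.ne'
    case hval =>
      intro a ha
      rw [Nat.div_div_self (Nat.dvd_of_mem_divisors ha) hm.ne']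
  rw [hreindex]

end EvenCase

end HP

theorem Hcount_formula :
    (∀ n : ℕ, Odd n → Hcount n = 0) ∧
    (∀ m : ℕ, 0 < m → (Hcount (2 * m) : ℚ)
      = 2 + (1 / (m : ℚ)) * ∑ d ∈ m.divisors, (Nat.totient d : ℚ) * 4 ^ (m / d)) := by
  constructor
  · intro n hn
    show Nat.card (HQuot n) = 0
    exact HP.Hcount_odd' hn
  · intro m hm
    have hnat := HP.hcount_even_nat m hm
    have hm' : (m : ℚ) ≠ 0 := Nat.cast_ne_zero.mpr hm.ne'
    have hq : (Hcount (2*m) : ℚ) * (2*m)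
        = 2 * (∑ d ∈ m.divisors, (Nat.totient d : ℚ) * 4^(m/d)) + 4*m := by
      show ((Nat.card (HQuot (2*m)) : ℚ)) * (2*m) = _
      have hc := congrArg (fun x : ℕ => (x : ℚ)) hnat
      push_cast at hc
      convert hc using 2
    field_simp
    linarith [hq]
end
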